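/- arXiv:1907.01936 — 6 statements merged into one kernel-verified Lean document; each statement's English description precedes it below -/
import Mathlib

section
/- If a Lipschitz map f : X → Y with f(0)=0 strongly attains its norm at the pair (x,y) (i.e. ‖f(x)-f(y)‖ = ‖f‖·‖x-y‖ where ‖f‖ is the Lipschitz constant), then for every pair of distinct points v, w on the segment [x,y] one has ‖f(v)-f(w)‖ = ‖f‖·‖v-w‖. -/
open Filter Topology

/-- If `f ∈ Lip₀(X,Y)` strongly attains its norm at `(x,y)`, then
`‖f v - f w‖ = ‖f‖ ‖v - w‖` for all distinct `v, w` in the segment `[x,y]`. -/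
theorem stmt0 {X Y : Type*} [NormedAddCommGroup X] [NormedSpace ℝ X] [CompleteSpace X]
    [NormedAddCommGroup Y] [NormedSpace ℝ Y] [CompleteSpace Y]
    (f : X → Y) (hf0 : f 0 = 0) (L : ℝ)
    (hlip : ∀ a b : X, ‖f a - f b‖ ≤ L * ‖a - b‖)
    (hopt : ∀ L' : ℝ, (∀ a b : X, ‖f a - f b‖ ≤ L' * ‖a - b‖) → L ≤ L')
    (x y : X) (hxy : x ≠ y) (hatt : ‖f x - f y‖ = L * ‖x - y‖) :
    ∀ v ∈ segment ℝ x y, ∀ w ∈ segment ℝ x y, v ≠ w → ‖f v - f w‖ = L * ‖v - w‖ := by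
  have key : ∀ t u : ℝ, 0 ≤ t → t ≤ u → u ≤ 1 →
      ‖f ((1-t)•x + t•y) - f ((1-u)•x + u•y)‖
        = L * ‖((1-t)•x + t•y) - ((1-u)•x + u•y)‖ := by
    intro t u ht htu hu
    set v := (1-t)•x + t•y with hv
    set w := (1-u)•x + u•y with hw
    have hxv : x - v = t • (x - y) := by rw [hv]; module
    have hvw : v - w = (u - t) • (x - y) := by rw [hv, hw]; module
    have hwy : w - y = (1 - u) • (x - y) := by rw [hw]; module
    have nxv : ‖x - v‖ = t * ‖x - y‖ := by
      rw [hxv, norm_smul, Real.norm_eq_abs, abs_of_nonneg ht]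
    have nvw : ‖v - w‖ = (u - t) * ‖x - y‖ := by
      rw [hvw, norm_smul, Real.norm_eq_abs, abs_of_nonneg (by linarith)]
    have nwy : ‖w - y‖ = (1 - u) * ‖x - y‖ := by
      rw [hwy, norm_smul, Real.norm_eq_abs, abs_of_nonneg (by linarith)]
    have h1 : ‖f x - f v‖ ≤ L * (t * ‖x - y‖) := by
      have := hlip x v; rwa [nxv] at this
    have h2 : ‖f v - f w‖ ≤ L * ((u - t) * ‖x - y‖) := by
      have := hlip v w; rwa [nvw] at this
    have h3 : ‖f w - f y‖ ≤ L * ((1 - u) * ‖x - y‖) := by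
      have := hlip w y; rwa [nwy] at this
    have htri : ‖f x - f y‖ ≤ ‖f x - f v‖ + ‖f v - f w‖ + ‖f w - f y‖ :=
      calc ‖f x - f y‖ ≤ ‖f x - f w‖ + ‖f w - f y‖ :=
              norm_sub_le_norm_sub_add_norm_sub _ _ _
        _ ≤ (‖f x - f v‖ + ‖f v - f w‖) + ‖f w - f y‖ := by
              gcongr; exact norm_sub_le_norm_sub_add_norm_sub _ _ _
    rw [nvw]
    nlinarith [h1, h2, h3, htri, hatt]
  rintro v hv w hw hvw
  rw [segment_eq_image] at hv hw
  obtain ⟨t, ⟨ht0, ht1⟩, rfl⟩ := hv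
  obtain ⟨u, ⟨hu0, hu1⟩, rfl⟩ := hw
  beta_reduce
  rcases le_total t u with h | h
  · exact key t u ht0 h hu1
  · rw [norm_sub_rev (f _), norm_sub_rev ((1-t)•x + t•y)]
    exact key u t hu0 h ht1
end

section
/- The function h(t) = √(1+t²) − 1 has Lipschitz constant 1, its derivative h'(t) = t/√(1+t²) satisfies |h'(t)| < 1 for all t and h'(t) → 1 as t → ∞; consequently h attains its norm directionally (toward z = 1 in direction u = 1) but does not attain it locally directionally at any point of ℝ. -/
open Filter Topology

lemma sqrt_pos' (t : ℝ) : 0 < Real.sqrt (1 + t ^ 2) :=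
  Real.sqrt_pos.2 (by positivity)

lemma hd (t : ℝ) : HasDerivAt (fun t : ℝ => Real.sqrt (1 + t ^ 2) - 1)
    (t / Real.sqrt (1 + t ^ 2)) t := by
  have h1 : HasDerivAt (fun t : ℝ => 1 + t ^ 2) (2 * t) t := by
    simpa using ((hasDerivAt_pow 2 t).const_add 1)
  have h2 := ((Real.hasDerivAt_sqrt (x := 1 + t ^ 2) (by positivity)).comp t h1).sub_const 1
  refine HasDerivAt.congr_deriv h2 ?_
  have := (sqrt_pos' t).ne'
  field_simp

lemma habs (t : ℝ) : |t / Real.sqrt (1 + t ^ 2)| < 1 := by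
  have hs := sqrt_pos' t
  rw [abs_div, abs_of_pos hs, div_lt_one hs]
  have h1 : |t| = Real.sqrt (t ^ 2) := by rw [Real.sqrt_sq_eq_abs]
  rw [h1]
  exact Real.sqrt_lt_sqrt (by positivity) (by linarith)

lemma hnull : Tendsto (fun t : ℝ => Real.sqrt (1 + t ^ 2) - t) atTop (𝓝 0) := by
  have heq : ∀ᶠ t : ℝ in atTop, (Real.sqrt (1 + t ^ 2) + t)⁻¹ = Real.sqrt (1 + t ^ 2) - t := by
    filter_upwards [eventually_ge_atTop (0 : ℝ)] with t ht
    have hs := sqrt_pos' t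
    have hsum : 0 < Real.sqrt (1 + t ^ 2) + t := by linarith
    rw [inv_eq_one_div, eq_comm, eq_div_iff hsum.ne']
    have : Real.sqrt (1 + t ^ 2) ^ 2 = 1 + t ^ 2 := Real.sq_sqrt (by positivity)
    nlinarith
  have htop : Tendsto (fun t : ℝ => Real.sqrt (1 + t ^ 2) + t) atTop atTop := by
    apply tendsto_atTop_mono (fun t => ?_) tendsto_id
    have := Real.sqrt_nonneg (1 + t ^ 2); simp only [id_eq]; linarith
  exact Tendsto.congr' heq htop.inv_tendsto_atTop

lemma hsqtop : Tendsto (fun t : ℝ => Real.sqrt (1 + t ^ 2)) atTop atTop := by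
  apply tendsto_atTop_mono (fun t => ?_) tendsto_id
  simp only [id_eq]
  calc t ≤ |t| := le_abs_self t
  _ = Real.sqrt (t ^ 2) := (Real.sqrt_sq_eq_abs t).symm
  _ ≤ Real.sqrt (1 + t ^ 2) := Real.sqrt_le_sqrt (by linarith)

/-- `h t = √(1+t²) - 1` has Lipschitz constant 1, `|h'(t)| < 1` everywhere, `h'(t) → 1` at `∞`;
it attains its norm directionally but not locally directionally at any point. -/
theorem stmt12 (h : ℝ → ℝ) (hdef : ∀ t : ℝ, h t = Real.sqrt (1 + t ^ 2) - 1) :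
    (∀ s t : ℝ, |h t - h s| ≤ |t - s|) ∧
    (∀ t : ℝ, HasDerivAt h (t / Real.sqrt (1 + t ^ 2)) t) ∧
    (∀ t : ℝ, |t / Real.sqrt (1 + t ^ 2)| < 1) ∧
    Tendsto (fun t : ℝ => t / Real.sqrt (1 + t ^ 2)) atTop (𝓝 1) ∧
    (∃ tn sn : ℕ → ℝ, (∀ n, sn n < tn n) ∧
      Tendsto (fun n => (h (tn n) - h (sn n)) / (tn n - sn n)) atTop (𝓝 1)) ∧
    ¬ ∃ (c : ℝ) (tn sn : ℕ → ℝ) (z : ℝ), (∀ n, tn n ≠ sn n) ∧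
        Tendsto tn atTop (𝓝 c) ∧ Tendsto sn atTop (𝓝 c) ∧
        Tendsto (fun n => (h (tn n) - h (sn n)) / (tn n - sn n)) atTop (𝓝 z) ∧
        |z| = 1 := by
  have hfun : h = fun t => Real.sqrt (1 + t ^ 2) - 1 := funext hdef
  subst hfun
  -- Lipschitz
  have hlip : ∀ s t : ℝ, |(Real.sqrt (1 + t ^ 2) - 1) - (Real.sqrt (1 + s ^ 2) - 1)| ≤ |t - s| := by
    have hL : LipschitzWith 1 (fun t : ℝ => Real.sqrt (1 + t ^ 2) - 1) := by
      apply lipschitzWith_of_nnnorm_deriv_le (fun t => (hd t).differentiableAt)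
      intro t
      rw [(hd t).deriv, ← NNReal.coe_le_coe]
      simp only [coe_nnnorm, Real.norm_eq_abs, NNReal.coe_one]
      exact (habs t).le
    intro s t
    have := hL.dist_le_mul t s
    simpa [Real.dist_eq] using this
  refine ⟨hlip, hd, habs, ?_, ?_, ?_⟩
  · -- tendsto at top
    have key : Tendsto (fun t : ℝ => 1 - (Real.sqrt (1 + t ^ 2) - t) * (Real.sqrt (1 + t ^ 2))⁻¹)
        atTop (𝓝 1) := by
      have := (hnull.mul hsqtop.inv_tendsto_atTop).const_sub 1
      simpa using this
    refine key.congr (fun t => ?_)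
    have hs := (sqrt_pos' t).ne'
    field_simp
    ring
  · -- directional attainment
    refine ⟨fun n => (n : ℝ) + 1, fun n => (n : ℝ), fun n => by norm_num, ?_⟩
    have h1 : Tendsto (fun n : ℕ => Real.sqrt (1 + ((n : ℝ) + 1) ^ 2) - ((n : ℝ) + 1)) atTop (𝓝 0) :=
      hnull.comp (tendsto_natCast_atTop_atTop.atTop_add tendsto_const_nhds)
    have h2 : Tendsto (fun n : ℕ => Real.sqrt (1 + (n : ℝ) ^ 2) - (n : ℝ)) atTop (𝓝 0) :=
      hnull.comp tendsto_natCast_atTop_atTop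
    have key := (h1.sub h2).add_const 1
    rw [sub_zero, zero_add] at key
    refine key.congr (fun n => ?_)
    rw [show ((n : ℝ) + 1) - (n : ℝ) = 1 by ring, div_one]
    ring
  · -- non-attainment
    rintro ⟨c, tn, sn, z, hne, htc, hsc, hslope, hz⟩
    set d : ℝ → ℝ := fun x => x / Real.sqrt (1 + x ^ 2) with hdd
    have hcont : Continuous d := by
      exact Continuous.div continuous_id
        (Real.continuous_sqrt.comp (continuous_const.add (continuous_pow 2)))
        (fun x => (sqrt_pos' x).ne')
    have key : ∀ n, ∃ x, min (tn n) (sn n) < x ∧ x < max (tn n) (sn n) ∧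
        d x = ((Real.sqrt (1 + (tn n) ^ 2) - 1) - (Real.sqrt (1 + (sn n) ^ 2) - 1)) / (tn n - sn n) := by
      intro n
      rcases lt_or_gt_of_ne (hne n) with hlt | hgt
      · obtain ⟨x, hx, hx'⟩ := exists_hasDerivAt_eq_slope _ d hlt
          (fun t _ => (hd t).continuousAt.continuousWithinAt)
          (fun t _ => hd t)
        refine ⟨x, ?_, ?_, ?_⟩
        · simpa [min_eq_left hlt.le] using hx.1
        · simpa [max_eq_right hlt.le] using hx.2
        · rw [hx', div_eq_div_iff (sub_ne_zero.2 hlt.ne') (sub_ne_zero.2 (hne n))]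
          ring
      · obtain ⟨x, hx, hx'⟩ := exists_hasDerivAt_eq_slope _ d hgt
          (fun t _ => (hd t).continuousAt.continuousWithinAt)
          (fun t _ => hd t)
        refine ⟨x, ?_, ?_, ?_⟩
        · simpa [min_eq_right hgt.le] using hx.1
        · simpa [max_eq_left hgt.le] using hx.2
        · rw [hx', div_eq_div_iff (sub_ne_zero.2 hgt.ne.symm) (sub_ne_zero.2 (hne n))]
          try ring
    choose xi h1 h2 h3 using key
    have hxic : Tendsto xi atTop (𝓝 c) := by
      have hmin : Tendsto (fun n => min (tn n) (sn n)) atTop (𝓝 c) := by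
        simpa using htc.min hsc
      have hmax : Tendsto (fun n => max (tn n) (sn n)) atTop (𝓝 c) := by
        simpa using htc.max hsc
      exact tendsto_of_tendsto_of_tendsto_of_le_of_le hmin hmax
        (fun n => (h1 n).le) (fun n => (h2 n).le)
    have hlim : Tendsto (fun n => d (xi n)) atTop (𝓝 (d c)) :=
      (hcont.tendsto c).comp hxic
    have hzd : z = d c := by
      apply tendsto_nhds_unique _ hlim
      exact hslope.congr (fun n => (h3 n).symm)
    rw [hzd] at hz
    exact absurd hz (habs c).ne
end

section
/- Define f : ℝ → L¹(ℝ) by f(t) = 0 for t ≤ 0 and f(t) = χ_{[0,t]} for t > 0. Then f is Lipschitz with constant 1 and strongly attains its norm at every pair 0 < s < t (‖f(t)-f(s)‖₁ = t - s), but f does not attain its norm locally directionally: for any sequences t_n, s_n converging to a common point with t_n ≠ s_n, the slopes (f(t_n)-f(s_n))/(t_n-s_n) do not converge to any z in L¹(ℝ) of norm 1. -/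
open Filter Topology MeasureTheory

/-- The map `f : ℝ → L¹(ℝ)`, `f t = χ_{(0,t]}` for `t > 0` and `f t = 0` for `t ≤ 0`, is
1-Lipschitz, strongly attains its norm at every pair `0 < s < t`, but does not attain its
norm locally directionally. -/
theorem stmt13 (f : ℝ → Lp ℝ 1 (volume : Measure ℝ))
    (hneg : ∀ t : ℝ, t ≤ 0 → f t = 0)
    (hpos : ∀ t : ℝ, 0 < t →
      f t = indicatorConstLp 1 (measurableSet_Ioc (a := (0 : ℝ)) (b := t))
        measure_Ioc_lt_top.ne (1 : ℝ)) :
    (∀ s t : ℝ, 0 < s → s < t → ‖f t - f s‖ = t - s) ∧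
    (∀ s t : ℝ, ‖f t - f s‖ ≤ |t - s|) ∧
    (∀ (c : ℝ) (tn sn : ℕ → ℝ), (∀ n, tn n ≠ sn n) →
      Tendsto tn atTop (𝓝 c) → Tendsto sn atTop (𝓝 c) →
      ¬ ∃ z : Lp ℝ 1 (volume : Measure ℝ), ‖z‖ = 1 ∧
          Tendsto (fun n => (tn n - sn n)⁻¹ • (f (tn n) - f (sn n))) atTop (𝓝 z)) := by
  -- key norm computation for `0 < s ≤ t`
  have hkey : ∀ s t : ℝ, 0 < s → s ≤ t → ‖f t - f s‖ = t - s := by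
    intro s t hs hst
    rw [hpos t (hs.trans_le hst), hpos s hs, ← dist_eq_norm,
      dist_indicatorConstLp_eq_norm, norm_indicatorConstLp one_ne_zero ENNReal.one_ne_top]
    have hdiff : symmDiff (Set.Ioc (0:ℝ) t) (Set.Ioc (0:ℝ) s) = Set.Ioc s t := by
      rw [symmDiff_of_ge (Set.Ioc_subset_Ioc_right hst)]
      ext x
      simp only [Set.mem_diff, Set.mem_Ioc, not_and, not_le]
      constructor
      · rintro ⟨⟨hx0, hxt⟩, h⟩; exact ⟨h hx0, hxt⟩
      · rintro ⟨hsx, hxt⟩; exact ⟨⟨hs.trans hsx, hxt⟩, fun _ => hsx⟩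
    rw [hdiff, measureReal_def, Real.volume_Ioc, ENNReal.toReal_ofReal (sub_nonneg.mpr hst)]
    simp
  -- Lipschitz bound for `s ≤ t`
  have hle : ∀ s t : ℝ, s ≤ t → ‖f t - f s‖ ≤ t - s := by
    intro s t hst
    rcases le_or_gt t 0 with ht | ht
    · rw [hneg t ht, hneg s (hst.trans ht)]
      simpa using sub_nonneg.mpr hst
    · rcases le_or_gt s 0 with hs | hs
      · rw [hneg s hs, sub_zero, hpos t ht,
          norm_indicatorConstLp one_ne_zero ENNReal.one_ne_top]
        rw [measureReal_def, Real.volume_Ioc, ENNReal.toReal_ofReal (by linarith)]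
        simp only [norm_one, one_mul, ENNReal.toReal_one, div_one, Real.rpow_one]
        linarith
      · rw [hkey s t hs hst]
  refine ⟨fun s t hs hst => hkey s t hs hst.le, ?_, ?_⟩
  · intro s t
    rcases le_total s t with h | h
    · rw [abs_of_nonneg (sub_nonneg.mpr h)]; exact hle s t h
    · rw [norm_sub_rev, abs_sub_comm, abs_of_nonneg (sub_nonneg.mpr h)]
      exact hle t s h
  -- part 3
  rintro c tn sn hne htn hsn ⟨z, hz1, hzt⟩
  -- a.e. description of `f t`
  have hae : ∀ t : ℝ,
      ⇑(f t) =ᵐ[(volume : Measure ℝ)] (Set.Ioc (0:ℝ) t).indicator (fun _ => (1:ℝ)) := by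
    intro t
    rcases le_or_gt t 0 with h | h
    · rw [hneg t h]
      filter_upwards [Lp.coeFn_zero ℝ 1 (volume : Measure ℝ)] with x hx
      rw [hx, Set.indicator_of_notMem]
      · rfl
      · simp only [Set.mem_Ioc, not_and, not_le]
        intro hx0; linarith
    · rw [hpos t h]; exact indicatorConstLp_coeFn
  set g : ℕ → Lp ℝ 1 (volume : Measure ℝ) :=
    fun n => (tn n - sn n)⁻¹ • (f (tn n) - f (sn n)) with hg
  -- `z` vanishes a.e. away from `c`
  have hzero : ∀ ε : ℝ, 0 < ε →
      ∀ᵐ x : ℝ ∂(volume : Measure ℝ), ε ≤ |x - c| → z x = 0 := by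
    intro ε hε
    set A : Set ℝ := {x : ℝ | ε ≤ |x - c|} with hA
    have hAm : MeasurableSet A :=
      measurableSet_le measurable_const ((measurable_id.sub measurable_const).abs)
    have hIle : ∀ᶠ n in atTop,
        (∫⁻ x in A, (‖z x‖₊ : ENNReal) ∂(volume : Measure ℝ)) ≤
          ENNReal.ofReal ‖z - g n‖ := by
      filter_upwards [htn (Metric.ball_mem_nhds c hε), hsn (Metric.ball_mem_nhds c hε)]
        with n h1 h2
      simp only [Set.mem_preimage, Metric.mem_ball, Real.dist_eq] at h1 h2
      have habs1 := abs_lt.mp h1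
      have habs2 := abs_lt.mp h2
      -- `g n` vanishes a.e. on `A`
      have hg0 : ∀ᵐ x : ℝ ∂(volume : Measure ℝ), x ∈ A → (g n) x = 0 := by
        filter_upwards [Lp.coeFn_smul ((tn n - sn n)⁻¹) (f (tn n) - f (sn n)),
          Lp.coeFn_sub (f (tn n)) (f (sn n)), hae (tn n), hae (sn n)]
          with x hx1 hx2 hx3 hx4 hxA
        have hxA' : ε ≤ |x - c| := hxA
        show ((tn n - sn n)⁻¹ • (f (tn n) - f (sn n))) x = 0
        rw [hx1, Pi.smul_apply, hx2, Pi.sub_apply, hx3, hx4]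
        have : (Set.Ioc (0:ℝ) (tn n)).indicator (fun _ => (1:ℝ)) x -
            (Set.Ioc (0:ℝ) (sn n)).indicator (fun _ => (1:ℝ)) x = 0 := by
          simp only [Set.indicator_apply, Set.mem_Ioc]
          rcases le_abs.mp hxA' with hx | hx
          · split_ifs with ha hb hb <;> try ring
            · exact absurd ha.2 (by linarith)
            · exact absurd hb.2 (by linarith)
          · split_ifs with ha hb hb <;> try ring
            · exact absurd (hb ⟨ha.1, by linarith⟩) (by simp)
            · exact absurd (⟨hb.1, by linarith⟩ : 0 < x ∧ x ≤ tn n) ha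
        rw [this, smul_zero]
      have hg0' : ∀ᵐ x : ℝ ∂((volume : Measure ℝ).restrict A), (g n) x = 0 :=
        (ae_restrict_iff' hAm).mpr hg0
      calc (∫⁻ x in A, (‖z x‖₊ : ENNReal) ∂(volume : Measure ℝ))
          = ∫⁻ x in A, (‖z x - (g n) x‖₊ : ENNReal) ∂(volume : Measure ℝ) := by
            refine lintegral_congr_ae ?_
            filter_upwards [hg0'] with x hx
            rw [hx, sub_zero]
        _ ≤ ∫⁻ x, (‖z x - (g n) x‖₊ : ENNReal) ∂(volume : Measure ℝ) :=
            setLIntegral_le_lintegral A _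
        _ = eLpNorm (⇑z - ⇑(g n)) 1 (volume : Measure ℝ) := by
            rw [eLpNorm_one_eq_lintegral_enorm]; rfl
        _ = eLpNorm (⇑(z - g n)) 1 (volume : Measure ℝ) :=
            (eLpNorm_congr_ae (Lp.coeFn_sub z (g n))).symm
        _ = ENNReal.ofReal ‖z - g n‖ := by
            rw [Lp.norm_def, ENNReal.ofReal_toReal (Lp.eLpNorm_ne_top _)]
    have htend : Tendsto (fun n => ENNReal.ofReal ‖z - g n‖) atTop (𝓝 0) := by
      have h1 : Tendsto (fun n => ‖z - g n‖) atTop (𝓝 0) := by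
        have := tendsto_iff_norm_sub_tendsto_zero.mp hzt
        exact this.congr fun n => norm_sub_rev _ _
      simpa using ENNReal.tendsto_ofReal h1
    have hI : (∫⁻ x in A, (‖z x‖₊ : ENNReal) ∂(volume : Measure ℝ)) = 0 :=
      le_antisymm (ge_of_tendsto htend hIle) (zero_le)
    have hz0 := (lintegral_eq_zero_iff'
      ((Lp.aestronglyMeasurable z).enorm.restrict)).mp hI
    have hz0' : ∀ᵐ x : ℝ ∂((volume : Measure ℝ).restrict A), z x = 0 := by
      filter_upwards [hz0] with x hx
      simpa using hx
    exact (ae_restrict_iff' hAm).mp hz0'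
  have hall : ∀ᵐ x : ℝ ∂(volume : Measure ℝ),
      ∀ k : ℕ, 1 / ((k : ℝ) + 1) ≤ |x - c| → z x = 0 :=
    ae_all_iff.mpr fun k => hzero (1 / ((k : ℝ) + 1)) (by positivity)
  have hnec : ∀ᵐ x : ℝ ∂(volume : Measure ℝ), x ≠ c := by
    refine ae_iff.mpr ?_
    simpa [Set.setOf_eq_eq_singleton] using measure_singleton c
  have hz0 : ⇑z =ᵐ[(volume : Measure ℝ)] 0 := by
    filter_upwards [hall, hnec] with x hx hxc
    obtain ⟨k, hk⟩ := exists_nat_one_div_lt (abs_pos.mpr (sub_ne_zero.mpr hxc))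
    exact hx k hk.le
  have : z = 0 := Lp.eq_zero_iff_ae_eq_zero.mpr hz0
  rw [this, norm_zero] at hz1
  exact one_ne_zero hz1.symm
end

section
/- In ℝ with the map g(t) = ∫₀ᵗ φ(s) ds, where φ(t) = 1 − 2^{-n} for 2^{-2^n} < t < 2^{-2^n} + 2^{-2^{n+1}} (n ∈ ℕ) and φ(t) = 0 otherwise: g is Lipschitz with constant 1, the slopes over the intervals (2^{-2^n}, 2^{-2^n}+2^{-2^{n+1}}) tend to 1 with endpoints tending to 0 (so g attains its norm locally directionally at 0), yet lim_{t→0⁺} g(t)/t = 0, so g is not norm-attaining through a derivative at 0. -/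
open Filter Topology MeasureTheory intervalIntegral

/-- For `φ` equal to `1 - 2^{-n}` on the intervals `(2^{-2^n}, 2^{-2^n} + 2^{-2^{n+1}})`
(`n ≥ 1`) and `0` elsewhere, and `g t = ∫₀ᵗ φ`: `g` is 1-Lipschitz, the slopes over those
intervals tend to `1` while the endpoints tend to `0` (local directional attainment at `0`),
yet `g(t)/t → 0` as `t → 0⁺`, so `g` does not attain its norm through a derivative at `0`. -/
theorem stmt16 (φ g : ℝ → ℝ) (a b : ℕ → ℝ)
    (ha : ∀ n : ℕ, a n = (2 : ℝ) ^ (-(2 ^ (n + 1) : ℤ)))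
    (hb : ∀ n : ℕ, b n = a n + (2 : ℝ) ^ (-(2 ^ (n + 2) : ℤ)))
    (hφdef : ∀ t : ℝ, φ t =
      ∑' n : ℕ, Set.indicator (Set.Ioo (a n) (b n)) (fun _ => 1 - (2 : ℝ) ^ (-(n + 1 : ℤ))) t)
    (hgdef : ∀ t : ℝ, g t = ∫ s in (0 : ℝ)..t, φ s) :
    (∀ s t : ℝ, |g t - g s| ≤ |t - s|) ∧
    Tendsto a atTop (𝓝 0) ∧ Tendsto b atTop (𝓝 0) ∧
    Tendsto (fun n => (g (b n) - g (a n)) / (b n - a n)) atTop (𝓝 1) ∧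
    Tendsto (fun t : ℝ => g t / t) (𝓝[>] (0 : ℝ)) (𝓝 0) ∧
    ¬ ∃ d : ℝ, |d| = 1 ∧ HasDerivAt g d 0 := by
  set F : ℕ → ℝ → ℝ :=
    fun n => Set.indicator (Set.Ioo (a n) (b n)) (fun _ => 1 - (2 : ℝ) ^ (-(n + 1 : ℤ))) with hF
  have hapos : ∀ n, 0 < a n := by intro n; rw [ha]; positivity
  have hkey : ∀ n, ((2 : ℝ) ^ (-(2 ^ (n + 1) : ℤ))) ^ 2 = (2 : ℝ) ^ (-(2 ^ (n + 2) : ℤ)) := by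
    intro n
    rw [sq, ← zpow_add₀ (two_ne_zero)]
    congr 1
    have : (2 : ℤ) ^ (n + 2) = 2 ^ (n + 1) + 2 ^ (n + 1) := by rw [pow_succ]; ring
    omega
  have hab : ∀ n, b n = a n + (a n) ^ 2 := by
    intro n; rw [hb, ha, hkey]
  have hsq : ∀ n, a (n + 1) = (a n) ^ 2 := by
    intro n; rw [ha, ha, hkey]
  have hblt : ∀ n, a n < b n := by
    intro n; rw [hab]; nlinarith [hapos n]
  have hale : ∀ n, a n ≤ 1 / 4 := by
    intro n
    rw [ha]
    calc (2 : ℝ) ^ (-(2 ^ (n + 1) : ℤ)) ≤ (2 : ℝ) ^ (-2 : ℤ) := by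
          apply zpow_le_zpow_right₀ one_le_two
          have : (2 : ℤ) ≤ 2 ^ (n + 1) := by
            calc (2 : ℤ) = 2 ^ 1 := by ring
              _ ≤ 2 ^ (n + 1) := pow_le_pow_right₀ one_le_two (by omega)
          omega
      _ = 1 / 4 := by norm_num
  have hantiA : Antitone a := by
    apply antitone_nat_of_succ_le
    intro n
    rw [hsq]
    nlinarith [hapos n, hale n]
  have hba : ∀ n, b (n + 1) ≤ a n := by
    intro n
    rw [hab, hsq]
    have h1 : a n ^ 2 ≤ a n / 4 := by nlinarith [hapos n, hale n]
    have h2 : (a n ^ 2) ^ 2 ≤ a n ^ 2 := by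
      have h3 : a n ^ 2 ≤ 1 := by nlinarith [hapos n, hale n]
      nlinarith [sq_nonneg (a n)]
    linarith [hapos n]
  have hantiB : Antitone b := by
    apply antitone_nat_of_succ_le
    intro n
    exact le_trans (hba n) (hblt n).le
  have hchain : ∀ p q : ℕ, p < q → b q ≤ a p := by
    intro p q hpq
    have h2 : b q ≤ a (q - 1) := by
      have h3 := hba (q - 1)
      rwa [show q - 1 + 1 = q by omega] at h3
    exact le_trans h2 (hantiA (by omega))
  -- pointwise facts about φ
  have hdisj : ∀ {m n : ℕ} {t : ℝ}, m ≠ n → t ∈ Set.Ioo (a n) (b n) → F m t = 0 := by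
    intro m n t hmn ht
    apply Set.indicator_of_notMem
    intro hm
    rcases lt_or_gt_of_ne hmn with h | h
    · have h1 : b n ≤ a m := hchain m n h
      linarith [ht.2, hm.1]
    · have h1 : b m ≤ a n := hchain n m h
      linarith [ht.1, hm.2]
  have hφ_mem : ∀ (n : ℕ) (t : ℝ), t ∈ Set.Ioo (a n) (b n) →
      φ t = 1 - (2 : ℝ) ^ (-(n + 1 : ℤ)) := by
    intro n t ht
    rw [hφdef]
    rw [tsum_eq_single n (fun m hmn => hdisj hmn ht)]
    exact Set.indicator_of_mem ht _
  have hφ_zero : ∀ t : ℝ, (∀ n, t ∉ Set.Ioo (a n) (b n)) → φ t = 0 := by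
    intro t h
    rw [hφdef]
    have h2 : ∀ n : ℕ,
        (Set.Ioo (a n) (b n)).indicator (fun _ => 1 - (2 : ℝ) ^ (-(n + 1 : ℤ))) t = 0 :=
      fun n => Set.indicator_of_notMem (h n) _
    exact (tsum_congr h2).trans tsum_zero
  have hcnn : ∀ n : ℕ, 0 ≤ 1 - (2 : ℝ) ^ (-(n + 1 : ℤ)) := by
    intro n
    have h2 : (2 : ℝ) ^ (-(n + 1 : ℤ)) ≤ (2 : ℝ) ^ (0 : ℤ) :=
      zpow_le_zpow_right₀ one_le_two (by omega)
    rw [zpow_zero] at h2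
    linarith
  have hcle : ∀ n : ℕ, 1 - (2 : ℝ) ^ (-(n + 1 : ℤ)) ≤ 1 := by
    intro n
    have : (0 : ℝ) < (2 : ℝ) ^ (-(n + 1 : ℤ)) := by positivity
    linarith
  have hφnn : ∀ t : ℝ, 0 ≤ φ t := by
    intro t
    by_cases h : ∃ n, t ∈ Set.Ioo (a n) (b n)
    · obtain ⟨n, hn⟩ := h
      rw [hφ_mem n t hn]; exact hcnn n
    · push_neg at h
      rw [hφ_zero t h]
  have hφle : ∀ t : ℝ, φ t ≤ 1 := by
    intro t
    by_cases h : ∃ n, t ∈ Set.Ioo (a n) (b n)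
    · obtain ⟨n, hn⟩ := h
      rw [hφ_mem n t hn]; exact hcle n
    · push_neg at h
      rw [hφ_zero t h]; norm_num
  -- measurability and integrability
  have hφmeas : Measurable φ := by
    have hFm : ∀ N : ℕ, Measurable (fun t => ∑ k ∈ Finset.range N, F k t) := by
      intro N
      apply Finset.measurable_sum
      intro k _
      exact Measurable.indicator measurable_const measurableSet_Ioo
    apply measurable_of_tendsto_metrizable hFm
    rw [tendsto_pi_nhds]
    intro t
    by_cases h : ∃ n, t ∈ Set.Ioo (a n) (b n)
    · obtain ⟨n, hn⟩ := h
      apply tendsto_atTop_of_eventually_const (i₀ := n + 1)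
      intro N hN
      rw [hφ_mem n t hn]
      rw [Finset.sum_eq_single n (fun m _ hmn => hdisj hmn hn)
        (fun hn' => absurd (Finset.mem_range.mpr (by omega)) hn')]
      exact Set.indicator_of_mem hn _
    · push_neg at h
      have hz : ∀ N : ℕ, ∑ k ∈ Finset.range N, F k t = 0 :=
        fun N => Finset.sum_eq_zero fun k _ => Set.indicator_of_notMem (h k) _
      rw [hφ_zero t h]
      simp only [hz]; exact (tendsto_const_nhds : Tendsto (fun _ : ℕ => (0:ℝ)) atTop (𝓝 0))
  have hφint : ∀ u v : ℝ, IntervalIntegrable φ volume u v := by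
    intro u v
    apply IntervalIntegrable.mono_fun' (g := fun _ => (1 : ℝ)) intervalIntegrable_const
      hφmeas.aestronglyMeasurable
    filter_upwards with x
    rw [Real.norm_eq_abs, abs_le]
    exact ⟨by linarith [hφnn x], hφle x⟩
  -- basic facts about g
  have hg0 : g 0 = 0 := by rw [hgdef]; exact integral_same
  have hgsub : ∀ s t : ℝ, g t - g s = ∫ x in s..t, φ x := by
    intro s t
    have h := integral_add_adjacent_intervals (hφint 0 s) (hφint s t)
    rw [hgdef, hgdef]
    linarith
  have hLip : ∀ s t : ℝ, |g t - g s| ≤ |t - s| := by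
    intro s t
    rw [hgsub, ← Real.norm_eq_abs (∫ x in s..t, φ x)]
    calc ‖∫ x in s..t, φ x‖ ≤ 1 * |t - s| := by
          apply intervalIntegral.norm_integral_le_of_norm_le_const
          intro x _
          rw [Real.norm_eq_abs, abs_le]
          exact ⟨by linarith [hφnn x], hφle x⟩
      _ = |t - s| := one_mul _
  -- convergence of a and b
  have hhalf : Tendsto (fun n : ℕ => (1 / 2 : ℝ) ^ n) atTop (𝓝 0) :=
    tendsto_pow_atTop_nhds_zero_of_lt_one (by norm_num) (by norm_num)
  have hale' : ∀ n : ℕ, a n ≤ (1 / 2 : ℝ) ^ n := by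
    intro n
    rw [ha]
    have h1 : (2 : ℝ) ^ (-(2 ^ (n + 1) : ℤ)) ≤ (2 : ℝ) ^ (-(n : ℤ)) := by
      apply zpow_le_zpow_right₀ one_le_two
      have : (n : ℤ) ≤ 2 ^ (n + 1) := by
        have := Nat.lt_two_pow_self (n := n)
        have h2 : (2:ℕ) ^ n ≤ 2 ^ (n+1) := Nat.pow_le_pow_right (by norm_num) (by omega)
        exact_mod_cast by omega
      omega
    calc (2 : ℝ) ^ (-(2 ^ (n + 1) : ℤ)) ≤ (2 : ℝ) ^ (-(n : ℤ)) := h1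
      _ = (1 / 2 : ℝ) ^ n := by
        rw [zpow_neg, ← one_div, one_div_pow]
        norm_num
  have hta : Tendsto a atTop (𝓝 0) :=
    squeeze_zero (fun n => (hapos n).le) hale' hhalf
  have htb : Tendsto b atTop (𝓝 0) := by
    apply squeeze_zero (fun n => le_trans (hapos n).le (hblt n).le)
      (g := fun n => 2 * a n)
    · intro n
      rw [hab]
      nlinarith [hapos n, hale n]
    · simpa using hta.const_mul 2
  -- slopes
  have hslope : ∀ n : ℕ, g (b n) - g (a n) = (1 - (2 : ℝ) ^ (-(n + 1 : ℤ))) * (b n - a n) := by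
    intro n
    rw [hgsub]
    rw [intervalIntegral.integral_congr_ae
      (g := fun _ => 1 - (2 : ℝ) ^ (-(n + 1 : ℤ)))]
    · rw [intervalIntegral.integral_const, smul_eq_mul]; ring
    · have h0 : ∀ᵐ x : ℝ, x ≠ b n := by
        have := Real.volume_singleton (a := b n)
        rw [← MeasureTheory.compl_mem_ae_iff] at this
        filter_upwards [this] with x hx
        simpa using hx
      filter_upwards [h0] with x hx hmem
      rw [Set.uIoc_of_le (hblt n).le] at hmem
      exact hφ_mem n x ⟨hmem.1, lt_of_le_of_ne hmem.2 hx⟩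
  have htc : Tendsto (fun n : ℕ => 1 - (2 : ℝ) ^ (-(n + 1 : ℤ))) atTop (𝓝 1) := by
    have h1 : Tendsto (fun n : ℕ => (2 : ℝ) ^ (-(n + 1 : ℤ))) atTop (𝓝 0) := by
      apply squeeze_zero (fun n => by positivity) (g := fun n : ℕ => (1 / 2 : ℝ) ^ n)
      · intro n
        calc (2 : ℝ) ^ (-(n + 1 : ℤ)) ≤ (2 : ℝ) ^ (-(n : ℤ)) :=
              zpow_le_zpow_right₀ one_le_two (by omega)
          _ = (1 / 2 : ℝ) ^ n := by
            rw [zpow_neg, ← one_div, one_div_pow]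
            norm_num
      · exact hhalf
    simpa using tendsto_const_nhds.sub h1
  have hslopes : Tendsto (fun n => (g (b n) - g (a n)) / (b n - a n)) atTop (𝓝 1) := by
    have : (fun n => (g (b n) - g (a n)) / (b n - a n)) =
        fun n : ℕ => 1 - (2 : ℝ) ^ (-(n + 1 : ℤ)) := by
      funext n
      rw [hslope n, mul_div_assoc, div_self (sub_ne_zero.mpr (hblt n).ne'), mul_one]
    rw [this]
    exact htc
  -- upper bound for g
  have hgnn : ∀ t : ℝ, 0 ≤ t → 0 ≤ g t := by
    intro t ht
    rw [hgdef]
    exact intervalIntegral.integral_nonneg ht (fun u _ => hφnn u)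
  have hglet : ∀ t : ℝ, 0 ≤ t → g t ≤ t := by
    intro t ht
    have h := hLip 0 t
    rw [hg0, sub_zero, sub_zero, abs_of_nonneg ht] at h
    exact le_trans (le_abs_self _) h
  have hseg : ∀ u v : ℝ, u ≤ v → (∫ s in u..v, φ s) ≤ v - u := by
    intro u v huv
    have h : ‖∫ s in u..v, φ s‖ ≤ 1 * |v - u| := by
      apply intervalIntegral.norm_integral_le_of_norm_le_const
      intro x _
      rw [Real.norm_eq_abs, abs_le]
      exact ⟨by linarith [hφnn x], hφle x⟩
    rw [Real.norm_eq_abs, one_mul,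
      abs_of_nonneg (show (0:ℝ) ≤ v - u by linarith)] at h
    exact le_trans (le_abs_self _) h
  have hgap : ∀ (k : ℕ) (x : ℝ), b (k + 1) ≤ x → x ≤ a k →
      (∫ s in (b (k + 1))..x, φ s) = 0 := by
    intro k x h1 h2
    rw [intervalIntegral.integral_congr (g := fun _ => (0 : ℝ))]
    · simp
    · intro s hs
      rw [Set.uIcc_of_le h1] at hs
      apply hφ_zero
      intro m hm
      rcases le_or_gt m k with hmk | hmk
      · have h3 : a k ≤ a m := hantiA hmk
        have h4 : s ≤ a k := le_trans hs.2 h2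
        exact absurd hm.1 (by linarith)
      · have h3 : b m ≤ b (k + 1) := hantiB hmk
        have h4 := hs.1
        exact absurd hm.2 (by linarith)
  have hmain : ∀ t : ℝ, 0 < t → t ≤ a 0 → g t ≤ 3 * t ^ 2 := by
    intro t ht h0
    have hex : ∃ k, a k < t := by
      have := hta.eventually_lt_const ht
      exact this.exists
    have hn0 : a (Nat.find hex) < t := Nat.find_spec hex
    have hn0pos : Nat.find hex ≠ 0 := by
      intro h
      rw [h] at hn0
      linarith
    obtain ⟨n, hn⟩ : ∃ n, Nat.find hex = n + 1 := ⟨Nat.find hex - 1, by omega⟩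
    rw [hn] at hn0
    have htle : t ≤ a n := not_lt.mp (Nat.find_min hex (by omega))
    have e1 : g t = g (a (n + 1)) + ∫ s in (a (n + 1))..t, φ s := by
      have := hgsub (a (n + 1)) t
      linarith
    have e2 : g (a (n + 1)) = g (b (n + 2)) := by
      have h3 := hgsub (b (n + 2)) (a (n + 1))
      rw [hgap (n + 1) (a (n + 1)) (hba (n + 1)) le_rfl] at h3
      linarith
    have e3 : g (b (n + 2)) ≤ a (n + 2) + (a (n + 2)) ^ 2 := by
      have h3 := hgsub (a (n + 2)) (b (n + 2))
      have h4 := hseg (a (n + 2)) (b (n + 2)) (hblt _).le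
      have h5 := hglet (a (n + 2)) (hapos _).le
      have h6 := hab (n + 2)
      nlinarith
    have i1 : (∫ s in (a (n + 1))..t, φ s) ≤ (a (n + 1)) ^ 2 := by
      rcases le_or_gt t (b (n + 1)) with hcase | hcase
      · calc (∫ s in (a (n + 1))..t, φ s) ≤ t - a (n + 1) := hseg _ _ hn0.le
          _ ≤ b (n + 1) - a (n + 1) := by linarith
          _ = (a (n + 1)) ^ 2 := by rw [hab]; ring
      · have hsplit := integral_add_adjacent_intervals
          (hφint (a (n + 1)) (b (n + 1))) (hφint (b (n + 1)) t)
        rw [hgap n t hcase.le htle] at hsplit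
        have h4 := hseg (a (n + 1)) (b (n + 1)) (hblt _).le
        have h6 := hab (n + 1)
        nlinarith
    have hA1 : a (n + 2) = (a (n + 1)) ^ 2 := hsq (n + 1)
    have hA2 : a (n + 1) < t := hn0
    nlinarith [hapos (n + 1), hapos (n + 2), hale (n + 2), sq_nonneg (a (n + 2))]
  -- the limit of g t / t
  have h5 : Tendsto (fun t : ℝ => g t / t) (𝓝[>] (0 : ℝ)) (𝓝 0) := by
    have hupper : Tendsto (fun t : ℝ => 3 * t) (𝓝[>] (0 : ℝ)) (𝓝 0) := by
      have : Tendsto (fun t : ℝ => 3 * t) (𝓝 (0 : ℝ)) (𝓝 0) := by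
        simpa using (continuous_mul_left (3 : ℝ)).tendsto (0 : ℝ)
      exact this.mono_left nhdsWithin_le_nhds
    apply squeeze_zero' ?_ ?_ hupper
    · filter_upwards [self_mem_nhdsWithin] with t ht
      exact div_nonneg (hgnn t (le_of_lt ht)) (le_of_lt ht)
    · filter_upwards [Ioc_mem_nhdsGT_of_mem ⟨le_rfl, hapos 0⟩, self_mem_nhdsWithin]
        with t ht ht'
      rw [div_le_iff₀ ht']
      have := hmain t ht' ht.2
      nlinarith
  refine ⟨hLip, hta, htb, hslopes, h5, ?_⟩
  rintro ⟨d, hd, hder⟩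
  have hs := hasDerivAt_iff_tendsto_slope.mp hder
  have hmono : (𝓝[>] (0 : ℝ)) ≤ 𝓝[≠] (0 : ℝ) :=
    nhdsWithin_mono 0 (fun x hx => ne_of_gt hx)
  have h6 : Tendsto (fun t : ℝ => g t / t) (𝓝[>] (0 : ℝ)) (𝓝 d) := by
    apply (hs.mono_left hmono).congr
    intro t
    simp [slope_def_field, hg0]
  have hd0 : d = 0 := tendsto_nhds_unique h6 h5
  rw [hd0] at hd
  simp at hd
end

section
/- Let Y be uniformly convex, T : Z → Y a bounded linear operator on a Banach space Z, M ⊆ S_Z a set with closed convex hull equal to B_Z, and suppose T attains its norm at some w ∈ S_Z with ‖T(w)‖ = ‖T‖ = 1. Then there exists a sequence (u_n) in M with T(u_n) → T(w); in particular the norm value ‖T‖ is approached along slopes from M. -/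
open Filter Topology

/-- If `Y` is uniformly convex, `M ⊆ S_Z` has closed convex hull equal to `B_Z`, and a
norm-one operator `T : Z → Y` attains its norm at `w ∈ S_Z`, then `T w` is approached by
images `T(u_n)` of points `u_n ∈ M`. -/
theorem stmt17 {Z Y : Type*} [NormedAddCommGroup Z] [NormedSpace ℝ Z] [CompleteSpace Z]
    [NormedAddCommGroup Y] [NormedSpace ℝ Y] [CompleteSpace Y] [UniformConvexSpace Y]
    (T : Z →L[ℝ] Y) (M : Set Z) (hM : M ⊆ Metric.sphere (0 : Z) 1)
    (hMhull : closure (convexHull ℝ M) = Metric.closedBall (0 : Z) 1)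
    (w : Z) (hw : ‖w‖ = 1) (hTw : ‖T w‖ = ‖T‖) (hT1 : ‖T‖ = 1) :
    ∃ u : ℕ → Z, (∀ n, u n ∈ M) ∧ Tendsto (fun n => T (u n)) atTop (𝓝 (T w)) := by
  have hTw1 : ‖T w‖ = 1 := hTw.trans hT1
  have hTwne : T w ≠ 0 := by
    intro h; rw [h, norm_zero] at hTw1; norm_num at hTw1
  obtain ⟨g, hg1, hgTw⟩ := exists_dual_vector ℝ (T w) (norm_ne_zero_iff.mpr hTwne)
  have hgTw1 : g (T w) = 1 := by
    have := hgTw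
    simp only [RCLike.ofReal_real_eq_id, id] at this
    rw [this, hTw1]
  -- key claim
  have key : ∀ ε : ℝ, 0 < ε → ∃ m ∈ M, ‖T m - T w‖ < ε := by
    intro ε hε
    obtain ⟨δ, hδ, H⟩ := exists_forall_closed_ball_dist_add_le_two_sub Y hε
    -- find v in convex hull close to w
    have hwmem : w ∈ closure (convexHull ℝ M) := by
      rw [hMhull]; simp [hw]
    rw [Metric.mem_closure_iff] at hwmem
    obtain ⟨v, hv, hvw⟩ := hwmem (δ/4) (by linarith)
    have hTvTw : ‖T v - T w‖ < δ/4 := by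
      have := T.le_opNorm (v - w)
      rw [hT1, one_mul] at this
      calc ‖T v - T w‖ = ‖T (v - w)‖ := by rw [map_sub]
        _ ≤ ‖v - w‖ := this
        _ < δ/4 := by rw [← dist_eq_norm, dist_comm]; exact hvw
    have hgTv : (1 : ℝ) - δ/4 < g (T v) := by
      have h1 : |g (T v) - g (T w)| ≤ ‖T v - T w‖ := by
        calc |g (T v) - g (T w)| = ‖g (T v - T w)‖ := by
              rw [map_sub]; simp [Real.norm_eq_abs]
          _ ≤ ‖g‖ * ‖T v - T w‖ := g.le_opNorm _
          _ = ‖T v - T w‖ := by rw [hg1, one_mul]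
      have := abs_sub_lt_iff.mp (lt_of_le_of_lt h1 hTvTw)
      rw [hgTw1] at this
      linarith [this.2]
    -- find m in M with g (T m) ≥ 1 - δ/4
    by_contra hcon
    push_neg at hcon
    -- first: some m with g (T m) ≥ 1 - δ/4
    have hexm : ∃ m ∈ M, (1 : ℝ) - δ/4 ≤ g (T m) := by
      by_contra hc2
      push_neg at hc2
      have hsub : convexHull ℝ M ⊆ {x | g (T x) < 1 - δ/4} := by
        apply convexHull_min
        · intro m hm; exact hc2 m hm
        · exact convex_halfSpace_lt (IsLinearMap.mk (fun a b => by simp)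
            (fun c a => by simp)) _
      have := hsub hv
      simp only [Set.mem_setOf_eq] at this
      linarith
    obtain ⟨m, hmM, hgm⟩ := hexm
    have hmnorm : ‖m‖ = 1 := by
      have := hM hmM; simpa [Metric.mem_sphere, dist_eq_norm] using this
    have hTm : ‖T m‖ ≤ 1 := by
      have := T.le_opNorm m
      rw [hT1, one_mul, hmnorm] at this; exact this
    have hTwle : ‖T w‖ ≤ 1 := le_of_eq hTw1
    have hsum : 2 - δ < ‖T m + T w‖ := by
      have h1 : g (T m + T w) ≤ ‖T m + T w‖ := by
        calc g (T m + T w) ≤ |g (T m + T w)| := le_abs_self _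
          _ = ‖g (T m + T w)‖ := (Real.norm_eq_abs _).symm
          _ ≤ ‖g‖ * ‖T m + T w‖ := g.le_opNorm _
          _ = ‖T m + T w‖ := by rw [hg1, one_mul]
      have h2 : (2 : ℝ) - δ/4 ≤ g (T m + T w) := by
        rw [map_add, hgTw1]; linarith
      linarith
    exact absurd (H hTm hTwle (hcon m hmM)) (by linarith)
  -- build sequence
  have hseq : ∀ n : ℕ, ∃ m ∈ M, ‖T m - T w‖ < 1/(n+1) := fun n =>
    key (1/(n+1)) (by positivity)
  choose u huM hu using hseq
  refine ⟨u, huM, ?_⟩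
  rw [tendsto_iff_norm_sub_tendsto_zero]
  apply squeeze_zero (fun n => norm_nonneg _) (fun n => (hu n).le)
  exact tendsto_one_div_add_atTop_nhds_zero_nat
end

section
/- If f : X → Y is a norm-one Lipschitz isomorphism (bi-Lipschitz bijection) between Banach spaces, then every g ∈ Lip₀(X,Y) with sufficiently small Lipschitz constant has the property that f − g is still a Lipschitz isomorphism from X onto Y; that is, the set of Lipschitz isomorphisms is open in Lip₀(X,Y). -/
open Filter Topology

/-- `f : X → Y` is a Lipschitz isomorphism if it is bijective, Lipschitz, and bi-Lipschitz
below (so its inverse is Lipschitz). -/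
def IsLipschitzIsomorphism {X Y : Type*} [NormedAddCommGroup X] [NormedAddCommGroup Y]
    (f : X → Y) : Prop :=
  Function.Bijective f ∧ (∃ C : ℝ, ∀ a b : X, ‖f a - f b‖ ≤ C * ‖a - b‖) ∧
    (∃ c : ℝ, 0 < c ∧ ∀ a b : X, c * ‖a - b‖ ≤ ‖f a - f b‖)

/-- If `f` is a norm-one Lipschitz isomorphism between Banach spaces, then `f - g` is still a
Lipschitz isomorphism for every `g ∈ Lip₀(X,Y)` of sufficiently small Lipschitz constant:
the set of Lipschitz isomorphisms is open in `Lip₀(X,Y)`. -/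
theorem stmt18 {X Y : Type*} [NormedAddCommGroup X] [NormedSpace ℝ X] [CompleteSpace X]
    [NormedAddCommGroup Y] [NormedSpace ℝ Y] [CompleteSpace Y]
    (f : X → Y) (hf0 : f 0 = 0) (hiso : IsLipschitzIsomorphism f)
    (hnorm1 : ∀ a b : X, ‖f a - f b‖ ≤ ‖a - b‖) :
    ∃ ε > (0 : ℝ), ∀ g : X → Y, g 0 = 0 →
      ∀ Lg : ℝ, Lg < ε → (∀ a b : X, ‖g a - g b‖ ≤ Lg * ‖a - b‖) →
        IsLipschitzIsomorphism (fun x => f x - g x) := by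
  obtain ⟨hbij, -, c, hc, hlow⟩ := hiso
  refine ⟨c, hc, fun g hg0 Lg hLg hgl => ?_⟩
  -- nonnegative Lipschitz constant for g
  set L : ℝ := max Lg 0 with hLdef
  have hL0 : 0 ≤ L := le_max_right _ _
  have hLc : L < c := max_lt hLg hc
  have hgl' : ∀ a b : X, ‖g a - g b‖ ≤ L * ‖a - b‖ := fun a b =>
    (hgl a b).trans (by
      have := norm_nonneg (a - b)
      nlinarith [le_max_left Lg 0])
  -- inverse of f
  set finv := Function.invFun f with hfinv
  have hfi : ∀ y, f (finv y) = y := fun y => Function.invFun_eq (hbij.surjective y)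
  have hfinvLip : ∀ y y' : Y, ‖finv y - finv y'‖ ≤ c⁻¹ * ‖y - y'‖ := by
    intro y y'
    have h := hlow (finv y) (finv y')
    rw [hfi, hfi] at h
    rw [inv_mul_eq_div, le_div_iff₀ hc]
    linarith
  -- lower bound for f - g
  have hlow' : ∀ a b : X, (c - L) * ‖a - b‖ ≤ ‖(f a - g a) - (f b - g b)‖ := by
    intro a b
    have h1 := hlow a b
    have h2 := hgl' a b
    have h3 : ‖f a - f b‖ - ‖g a - g b‖ ≤ ‖(f a - g a) - (f b - g b)‖ := by
      have := norm_sub_norm_le (f a - f b) (g a - g b)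
      have heq : (f a - f b) - (g a - g b) = (f a - g a) - (f b - g b) := by abel
      rwa [heq] at this
    nlinarith
  -- injectivity
  have hinj : Function.Injective (fun x => f x - g x) := by
    intro a b hab
    simp only at hab
    have := hlow' a b
    rw [hab, sub_self, norm_zero] at this
    have h0 : ‖a - b‖ ≤ 0 := by nlinarith [norm_nonneg (a - b)]
    have := norm_nonneg (a - b)
    have : ‖a - b‖ = 0 := le_antisymm h0 this
    rwa [norm_eq_zero, sub_eq_zero] at this
  -- surjectivity via Banach fixed point
  have hsurj : Function.Surjective (fun x => f x - g x) := by
    intro y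
    set K : NNReal := ⟨L / c, div_nonneg hL0 hc.le⟩ with hK
    have hK1 : K < 1 := by
      rw [← NNReal.coe_lt_coe]
      show L / c < ((1 : NNReal) : ℝ)
      rw [NNReal.coe_one]
      exact (div_lt_one hc).2 hLc
    have hlip : LipschitzWith K (fun x => finv (y + g x)) := by
      apply LipschitzWith.of_dist_le_mul
      intro a b
      simp only [dist_eq_norm]
      calc ‖finv (y + g a) - finv (y + g b)‖ ≤ c⁻¹ * ‖(y + g a) - (y + g b)‖ :=
            hfinvLip _ _
        _ ≤ c⁻¹ * (L * ‖a - b‖) := by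
            have : (y + g a) - (y + g b) = g a - g b := by abel
            rw [this]
            exact mul_le_mul_of_nonneg_left (hgl' a b) (inv_nonneg.2 hc.le)
        _ = (K : ℝ) * ‖a - b‖ := by
            show c⁻¹ * (L * ‖a - b‖) = L / c * ‖a - b‖
            rw [div_eq_inv_mul, mul_assoc]
    have hcontract : ContractingWith K (fun x => finv (y + g x)) := ⟨hK1, hlip⟩
    set x := hcontract.fixedPoint (fun x => finv (y + g x)) with hxdef
    have hx := hcontract.fixedPoint_isFixedPt
    refine ⟨x, ?_⟩
    have hx' : finv (y + g x) = x := hx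
    have hfx : f x = y + g x := by conv_lhs => rw [← hx']
                                   rw [hfi]
    show f x - g x = y
    rw [hfx]; abel
  exact ⟨⟨hinj, hsurj⟩,
    ⟨1 + L, fun a b => by
      have h1 := hnorm1 a b
      have h2 := hgl' a b
      have h3 : ‖(f a - g a) - (f b - g b)‖ ≤ ‖f a - f b‖ + ‖g a - g b‖ := by
        have := norm_sub_le (f a - f b) (g a - g b)
        have heq : (f a - f b) - (g a - g b) = (f a - g a) - (f b - g b) := by abel
        rwa [heq] at this
      nlinarith⟩,
    ⟨c - L, by linarith, hlow'⟩⟩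
end
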